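/- Fix a compact set K ⊆ GL_n(ℂ). There exist ε > 0 and m_1 such that for all m ≥ m_1 and all (g_1,…,g_m) ∈ K^m, the set {∑_{i=1}^m g_i t_i : t_1,…,t_m ∈ T} contains an open ball of radius ε around some point of ℂ^n, where T = {(z_1,…,z_n) : all |z_j| = 1}. -/

import Mathlib

/-- Euclidean norm on `Fin n → ℂ`. -/
noncomputable def enorm {n : ℕ} (v : Fin n → ℂ) : ℝ :=
  Real.sqrt (∑ i, ‖v i‖ ^ 2)

/-- Open Euclidean ball in `Fin n → ℂ`. -/
def eball {n : ℕ} (x : Fin n → ℂ) (r : ℝ) : Set (Fin n → ℂ) :=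
  {y | _root_.enorm (y - x) < r}

/-!
Among `m > N` matrices from `K`, two of them, `g₁` and `g₂`, are close to each other: cover `K`
by finitely many small balls and use the pigeonhole principle. Put `t = 1` for all other indices.
Every vector `z` of the polydisc of radius `1/2` around `1` splits coordinatewise as
`z = (z - s ∘ z) + s ∘ z` into two vectors with unimodular coordinates, where `s` is Lipschitz.
Then `g₁ (z - s ∘ z) + g₂ (s ∘ z) = g₁ z + (g₂ - g₁) (s ∘ z)` is a small Lipschitz perturbation
of the invertible linear map `g₁`, so by the contraction argument of the inverse function theorem
its image contains a ball whose radius depends only on a bound for `‖g⁻¹‖` over `K`.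
-/

open scoped NNReal Matrix

theorem norm_le_enorm {n : ℕ} (v : Fin n → ℂ) : ‖v‖ ≤ _root_.enorm v :=
  (pi_norm_le_iff_of_nonneg (Real.sqrt_nonneg _)).2 fun j =>
    (abs_norm (v j)).symm.trans_le <| Real.abs_le_sqrt <|
      Finset.single_le_sum (fun i _ => sq_nonneg ‖v i‖) (Finset.mem_univ j)

theorem eball_subset_closedBall {n : ℕ} (y : Fin n → ℂ) (ε : ℝ) :
    eball y ε ⊆ Metric.closedBall y ε :=
  fun _ hv => mem_closedBall_iff_norm.2 ((norm_le_enorm _).trans hv.le)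

section

open Complex Metric Set Matrix Function

section Matrix

variable {𝕜 m n : Type*} [Fintype m] [Fintype n] [DecidableEq n]

theorem Matrix.continuousOn_inv [Field 𝕜] [TopologicalSpace 𝕜] [IsTopologicalRing 𝕜]
    [ContinuousInv₀ 𝕜] : ContinuousOn (fun A : Matrix n n 𝕜 => A⁻¹) {A | A.det ≠ 0} := by
  have : EqOn (fun A : Matrix n n 𝕜 => A⁻¹) (fun A => A.det⁻¹ • A.adjugate) {A | A.det ≠ 0} :=
    fun A _ => by simp only [inv_def, Ring.inverse_eq_inv']
  exact ContinuousOn.congr ((continuous_id.matrix_det.continuousOn.inv₀ fun A hA => hA).smul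
    continuous_id.matrix_adjugate.continuousOn) this

variable (𝕜) [NontriviallyNormedField 𝕜] [CompleteSpace 𝕜]

noncomputable def Matrix.mulVecCLM : Matrix m n 𝕜 →L[𝕜] (n → 𝕜) →L[𝕜] (m → 𝕜) :=
  LinearMap.toContinuousLinearMap
    (LinearMap.toContinuousLinearMap.toLinearMap ∘ₗ Matrix.toLin'.toLinearMap)

variable {𝕜}

@[simp]
theorem Matrix.mulVecCLM_apply (A : Matrix m n 𝕜) (v : n → 𝕜) : mulVecCLM 𝕜 A v = A *ᵥ v :=
  rfl

theorem exists_nnnorm_mulVecCLM_inv_le {K : Set (Matrix n n 𝕜)} (hK : ∀ g ∈ K, g.det ≠ 0)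
    (hc : IsCompact K) : ∃ C : ℝ≥0, 0 < C ∧ ∀ g ∈ K, ‖mulVecCLM 𝕜 g⁻¹‖₊ ≤ C := by
  obtain ⟨C, hC⟩ := hc.exists_bound_of_continuousOn
    ((mulVecCLM 𝕜).continuous.comp_continuousOn (Matrix.continuousOn_inv.mono hK))
  refine ⟨C.toNNReal + 1, by positivity, fun g hg => ?_⟩
  calc ‖mulVecCLM 𝕜 g⁻¹‖₊ = ‖mulVecCLM 𝕜 g⁻¹‖.toNNReal := by simp
    _ ≤ C.toNNReal := Real.toNNReal_le_toNNReal (hC g hg)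
    _ ≤ C.toNNReal + 1 := le_self_add

end Matrix

theorem IsCompact.exists_ne_dist_lt {α : Type*} [PseudoMetricSpace α] {s : Set α}
    (hs : IsCompact s) {η : ℝ} (hη : 0 < η) :
    ∃ N : ℕ, ∀ {ι : Type*} [Fintype ι], N < Fintype.card ι → ∀ x : ι → α, (∀ i, x i ∈ s) →
      ∃ i j, i ≠ j ∧ dist (x i) (x j) < η := by
  obtain ⟨t, -, ht, hst⟩ := hs.finite_cover_balls (half_pos hη)
  refine ⟨ht.toFinset.card, fun hcard x hx => ?_⟩
  have hcenter : ∀ i, ∃ c ∈ ht.toFinset, x i ∈ ball c (η / 2) := fun i => by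
    simpa using hst (hx i)
  choose c hct hxc using hcenter
  obtain ⟨i, -, j, -, hij, hcij⟩ :=
    Finset.exists_ne_map_eq_of_card_lt_of_maps_to hcard fun i _ => hct i
  refine ⟨i, j, hij, ?_⟩
  calc dist (x i) (x j) ≤ dist (x i) (c i) + dist (x j) (c j) := by
        rw [hcij]; exact dist_triangle_right _ _ _
    _ < η / 2 + η / 2 := add_lt_add (hxc i) (hxc j)
    _ = η := add_halves η

theorem surjOn_add_comp_closedBall {𝕜 : Type*} [NontriviallyNormedField 𝕜]
    {E F G : Type*} [NormedAddCommGroup E] [NormedSpace 𝕜 E] [CompleteSpace E]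
    [NormedAddCommGroup F] [NormedSpace 𝕜 F] [NormedAddCommGroup G] [NormedSpace 𝕜 G]
    {A : E →L[𝕜] F} {A' : F →L[𝕜] E} {B : G →L[𝕜] F} {φ : E → G} {C η L : ℝ≥0}
    {b : E} {r : ℝ} (hAA' : ∀ y, A (A' y) = y) (hA' : ‖A'‖₊ ≤ C) (hB : ‖B‖₊ ≤ η)
    (hφ : LipschitzOnWith L φ (closedBall b r)) (hr : 0 ≤ r) :
    SurjOn (fun z => A z + B (φ z)) (closedBall b r)
      (closedBall (A b + B (φ b)) (((C : ℝ)⁻¹ - η * L) * r)) := by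
  let rightInv : A.NonlinearRightInverse :=
    { toFun := A'
      nnnorm := C
      bound' := fun y => (A'.le_opNorm y).trans (by gcongr; exact hA')
      right_inv' := hAA' }
  have hf : ApproximatesLinearOn (fun z => A z + B (φ z)) A (closedBall b r) (η * L) := by
    apply LipschitzOnWith.approximatesLinearOn
    have : (fun z => A z + B (φ z)) - A = B ∘ φ := by ext z; simp
    rw [this]
    exact (B.lipschitz.weaken hB).comp_lipschitzOnWith hφ
  exact hf.surjOn_closedBall_of_nonlinearRightInverse rightInv hr subset_rfl

theorem LipschitzOnWith.comp_pi_closedBall {ι α β : Type*} [Fintype ι] [PseudoMetricSpace α]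
    [PseudoMetricSpace β] {f : α → β} {L : ℝ≥0} {a : α} {r : ℝ}
    (hf : LipschitzOnWith L f (closedBall a r)) (hr : 0 ≤ r) :
    LipschitzOnWith L (fun z : ι → α => f ∘ z) (closedBall (fun _ => a) r) := by
  refine LipschitzOnWith.of_dist_le_mul fun z hz w hw => ?_
  rw [closedBall_pi _ hr] at hz hw
  refine (dist_pi_le_iff (by positivity)).2 fun k => ?_
  exact (hf.dist_le_mul _ (hz k trivial) _ (hw k trivial)).trans
    (by gcongr; exact dist_le_pi_dist z w k)

/-- `unitSplit z` and `z - unitSplit z` are `z (1/2 ± y i)` with `1/4 + y² = ‖z‖⁻²`, so both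
have modulus one. -/
noncomputable def unitSplit (z : ℂ) : ℂ := z * ((1 / 2 : ℝ) + √((‖z‖ ^ 2)⁻¹ - 4⁻¹) * I)

theorem norm_mul_half_add_mul_I {z : ℂ} {y : ℝ} (hz : z ≠ 0)
    (hy : y ^ 2 = (‖z‖ ^ 2)⁻¹ - 4⁻¹) : ‖z * ((1 / 2 : ℝ) + y * I)‖ = 1 := by
  have : (1 / 2 : ℝ) ^ 2 + y ^ 2 = ‖z‖⁻¹ ^ 2 := by rw [hy, inv_pow]; ring
  rw [norm_mul, norm_add_mul_I, this, Real.sqrt_sq (by positivity),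
    mul_inv_cancel₀ (norm_ne_zero_iff.2 hz)]

theorem norm_mem_Icc_of_mem_closedBall_one {z : ℂ} (hz : z ∈ closedBall (1 : ℂ) (1 / 2)) :
    ‖z‖ ∈ Icc (1 / 2) (3 / 2) := by
  rw [mem_closedBall, dist_eq_norm] at hz
  constructor
  · linarith [norm_sub_norm_le 1 z, norm_sub_rev z 1, norm_one (α := ℂ)]
  · linarith [norm_sub_norm_le z 1, norm_one (α := ℂ)]

theorem ne_zero_of_mem_closedBall_one {z : ℂ} (hz : z ∈ closedBall (1 : ℂ) (1 / 2)) : z ≠ 0 :=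
  norm_pos_iff.1 <| one_half_pos.trans_le (norm_mem_Icc_of_mem_closedBall_one hz).1

theorem inv_sq_norm_sub_pos {z : ℂ} (hz : z ∈ closedBall (1 : ℂ) (1 / 2)) :
    0 < (‖z‖ ^ 2)⁻¹ - 4⁻¹ := by
  obtain ⟨h₁, h₂⟩ := norm_mem_Icc_of_mem_closedBall_one hz
  have : 4⁻¹ < (‖z‖ ^ 2)⁻¹ := inv_strictAnti₀ (by positivity) (by nlinarith)
  linarith

theorem norm_unitSplit {z : ℂ} (hz : z ∈ closedBall (1 : ℂ) (1 / 2)) : ‖unitSplit z‖ = 1 :=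
  norm_mul_half_add_mul_I (ne_zero_of_mem_closedBall_one hz)
    (Real.sq_sqrt (inv_sq_norm_sub_pos hz).le)

theorem norm_sub_unitSplit {z : ℂ} (hz : z ∈ closedBall (1 : ℂ) (1 / 2)) :
    ‖z - unitSplit z‖ = 1 := by
  have : z - unitSplit z = z * ((1 / 2 : ℝ) + (-√((‖z‖ ^ 2)⁻¹ - 4⁻¹) : ℝ) * I) := by
    simp only [unitSplit]; push_cast; ring
  rw [this]
  exact norm_mul_half_add_mul_I (ne_zero_of_mem_closedBall_one hz)
    (by rw [neg_sq, Real.sq_sqrt (inv_sq_norm_sub_pos hz).le])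

theorem exists_lipschitzOnWith_unitSplit :
    ∃ L, LipschitzOnWith L unitSplit (closedBall (1 : ℂ) (1 / 2)) := by
  have hsq : ContDiffOn ℝ 1 (fun z : ℂ => (‖z‖ ^ 2)⁻¹ - 4⁻¹) (closedBall (1 : ℂ) (1 / 2)) :=
    ((contDiff_norm_sq ℝ).contDiffOn.inv fun z hz =>
      pow_ne_zero 2 (norm_ne_zero_iff.2 (ne_zero_of_mem_closedBall_one hz))).sub contDiffOn_const
  have hsqrt := hsq.sqrt fun z hz => (inv_sq_norm_sub_pos hz).ne'
  have : ContDiffOn ℝ 1 unitSplit (closedBall (1 : ℂ) (1 / 2)) :=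
    contDiffOn_id.mul (contDiffOn_const.add
      ((ofRealCLM.contDiff.comp_contDiffOn hsqrt).mul contDiffOn_const))
  exact this.exists_lipschitzOnWith one_ne_zero (convex_closedBall _ _) (isCompact_closedBall _ _)

def torusSums {ι n : Type*} [Fintype ι] [Fintype n] (g : ι → Matrix n n ℂ) : Set (n → ℂ) :=
  {v | ∃ t : ι → n → ℂ, (∀ i j, ‖t i j‖ = 1) ∧ v = ∑ i, g i *ᵥ t i}

theorem closedBall_subset_torusSums_pair {n : ℕ} {g₁ g₂ : Matrix (Fin n) (Fin n) ℂ}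
    {C L : ℝ≥0} (hC : 0 < C) (hg₁ : g₁.det ≠ 0) (hg₁C : ‖mulVecCLM ℂ g₁⁻¹‖₊ ≤ C)
    (hL : LipschitzOnWith L unitSplit (closedBall (1 : ℂ) (1 / 2)))
    (hg₂ : ‖mulVecCLM ℂ (g₂ - g₁)‖ ≤ (2 * C * (L + 1) : ℝ)⁻¹) :
    ∃ y, closedBall y ((4 * C : ℝ)⁻¹) ⊆ torusSums ![g₁, g₂] := by
  have hsurj := surjOn_add_comp_closedBall (A := mulVecCLM ℂ g₁) (A' := mulVecCLM ℂ g₁⁻¹)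
    (B := mulVecCLM ℂ (g₂ - g₁)) (fun y => by
      simp [mulVec_mulVec, mul_nonsing_inv _ (isUnit_iff_ne_zero.2 hg₁)]) hg₁C le_rfl
    (hL.comp_pi_closedBall (ι := Fin n) (by norm_num)) (by norm_num : (0 : ℝ) ≤ 1 / 2)
  have hradius : (4 * C : ℝ)⁻¹ ≤ ((C : ℝ)⁻¹ - ‖mulVecCLM ℂ (g₂ - g₁)‖₊ * L) * (1 / 2) := by
    have : ‖mulVecCLM ℂ (g₂ - g₁)‖ * L ≤ (2 * C : ℝ)⁻¹ :=
      calc ‖mulVecCLM ℂ (g₂ - g₁)‖ * L ≤ (2 * C * (L + 1) : ℝ)⁻¹ * (L + 1) := by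
            gcongr; linarith
        _ = (2 * C : ℝ)⁻¹ := by field_simp
    rw [mul_inv] at this
    rw [coe_nnnorm, mul_inv]
    linarith
  refine ⟨g₁ *ᵥ 1 + (g₂ - g₁) *ᵥ (unitSplit ∘ 1), fun v hv => ?_⟩
  obtain ⟨z, hz, rfl⟩ := hsurj (closedBall_subset_closedBall hradius hv)
  have hzk : ∀ k, z k ∈ closedBall (1 : ℂ) (1 / 2) := by
    rw [closedBall_pi _ (by norm_num)] at hz; exact fun k => hz k trivial
  refine ⟨![z - unitSplit ∘ z, unitSplit ∘ z], fun i k => ?_, ?_⟩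
  · fin_cases i
    · exact norm_sub_unitSplit (hzk k)
    · exact norm_unitSplit (hzk k)
  · simp only [mulVecCLM_apply, Fin.sum_univ_two, cons_val_zero, cons_val_one, mulVec_sub,
      sub_mulVec]
    abel

theorem add_mem_torusSums_of_mem_torusSums_pair {ι n : Type*} [Fintype ι] [DecidableEq ι]
    [Fintype n] (g : ι → Matrix n n ℂ) {i j : ι} (hij : i ≠ j) {v : n → ℂ}
    (hv : v ∈ torusSums ![g i, g j]) :
    (∑ k, g k *ᵥ 1 - g i *ᵥ 1 - g j *ᵥ 1) + v ∈ torusSums g := by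
  obtain ⟨t, ht, rfl⟩ := hv
  set t' := update (update (1 : ι → n → ℂ) i (t 0)) j (t 1)
  refine ⟨t', fun k l => ?_, ?_⟩
  · rcases eq_or_ne k j with rfl | hkj
    · simpa [t'] using ht 1 l
    rcases eq_or_ne k i with rfl | hki
    · simpa [t', hkj] using ht 0 l
    simp [t', hkj, hki]
  · have hsub : ∑ k, g k *ᵥ (t' k - 1) = g i *ᵥ (t 0 - 1) + g j *ᵥ (t 1 - 1) := by
      rw [Fintype.sum_eq_add i j hij fun k hk => by simp [t', hk.1, hk.2]]
      simp [t', hij]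
    simp only [mulVec_sub, Finset.sum_sub_distrib, sub_eq_iff_eq_add] at hsub
    rw [Fin.sum_univ_two, hsub]
    simp only [cons_val_zero, cons_val_one]
    abel

end

theorem stmt13 (n : ℕ) (K : Set (Matrix (Fin n) (Fin n) ℂ))
    (hK : ∀ g ∈ K, g.det ≠ 0) (hc : IsCompact K) :
    ∃ ε : ℝ, 0 < ε ∧ ∃ m₁ : ℕ, ∀ m : ℕ, m₁ ≤ m →
      ∀ g : Fin m → Matrix (Fin n) (Fin n) ℂ, (∀ i, g i ∈ K) →
        ∃ y : Fin n → ℂ, eball y ε ⊆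
          {v | ∃ t : Fin m → (Fin n → ℂ),
            (∀ i j, ‖t i j‖ = 1) ∧ v = ∑ i, Matrix.mulVec (g i) (t i)} := by
  obtain ⟨C, hC, hKC⟩ := exists_nnnorm_mulVecCLM_inv_le hK hc
  obtain ⟨L, hL⟩ := exists_lipschitzOnWith_unitSplit
  obtain ⟨N, hN⟩ := (hc.image (Matrix.mulVecCLM ℂ).continuous).exists_ne_dist_lt
    (η := (2 * C * (L + 1) : ℝ)⁻¹) (by positivity)
  refine ⟨(4 * C : ℝ)⁻¹, by positivity, N + 1, fun m hm g hg => ?_⟩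
  obtain ⟨i, j, hij, hgij⟩ := hN (by simpa using hm) (fun k => Matrix.mulVecCLM ℂ (g k))
    fun k => Set.mem_image_of_mem _ (hg k)
  rw [dist_comm, dist_eq_norm, ← map_sub] at hgij
  obtain ⟨y, hy⟩ := closedBall_subset_torusSums_pair hC (hK _ (hg i)) (hKC _ (hg i)) hL hgij.le
  set c := ∑ k, g k *ᵥ 1 - g i *ᵥ 1 - g j *ᵥ 1
  refine ⟨c + y, fun v hv => ?_⟩
  have hvy : v - c ∈ Metric.closedBall y (4 * C : ℝ)⁻¹ := by
    simpa [mem_closedBall_iff_norm, sub_sub, add_comm c] using eball_subset_closedBall _ _ hv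
  rw [← add_sub_cancel c v]
  exact add_mem_torusSums_of_mem_torusSums_pair g hij (hy hvy)
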